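/- (Key step of Theorem 3.1.) Under Assumption 1 (f(y) ≤ f(x) + ∇f(x)ᵀ(y−x) + (λ/2)‖y−x‖_p^p on S), with h convex, 0 < ε ≤ diam_p(S)^p λ, let y^k minimize L(y;x^k) = ∇f(x^k)ᵀ(y−x^k) + h(y) over S, let α_k minimize α ↦ α∇f(x^k)ᵀ(y^k − x^k) + α^p(λ/2)‖y^k−x^k‖_p^p + (1−α)h(x^k) + αh(y^k) over [0,1], and set x^{k+1} = (1−α_k)x^k + α_k y^k. Then ΔL_k := −∇f(x^k)ᵀ(y^k−x^k) + h(x^k) − h(y^k) satisfies ΔL_k ≤ (ε/(diam_p(S)^p λ))^{−1/(p−1)} (Φ(x^k) − Φ(x^{k+1})) + ε/2. -/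

import Mathlib

/-!
Comparing the line-search step `α_k` with the fixed step `α = t ^ (1 / (p - 1))`,
`t = ε / (D ^ p λ)`, the upper model gives
`Φ(x^k) - Φ(x^{k+1}) ≥ α ΔL_k - α ^ p (λ / 2) ‖y^k - x^k‖_p ^ p`.
Since `α ^ p = α t` and `‖y^k - x^k‖_p ≤ D`, the last term is at most `α ε / 2`;
dividing by `α` gives the claim.
-/

open scoped RealInnerProductSpace

noncomputable def lpNorm {n : ℕ} (p : ℝ) (x : EuclideanSpace ℝ (Fin n)) : ℝ :=
  (∑ i, |x i| ^ p) ^ (1 / p)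

section LpNorm

variable {n : ℕ} {p : ℝ}

lemma lpNorm_nonneg (z : EuclideanSpace ℝ (Fin n)) : 0 ≤ lpNorm p z :=
  Real.rpow_nonneg (Finset.sum_nonneg fun _ _ => Real.rpow_nonneg (abs_nonneg _) p) _

lemma lpNorm_rpow (hp : 0 < p) (z : EuclideanSpace ℝ (Fin n)) :
    lpNorm p z ^ p = ∑ i, |z i| ^ p := by
  rw [lpNorm, one_div, Real.rpow_inv_rpow
    (Finset.sum_nonneg fun _ _ => Real.rpow_nonneg (abs_nonneg _) p) hp.ne']

lemma lpNorm_smul_rpow (hp : 0 < p) {a : ℝ} (ha : 0 ≤ a) (z : EuclideanSpace ℝ (Fin n)) :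
    lpNorm p (a • z) ^ p = a ^ p * lpNorm p z ^ p := by
  simp only [lpNorm_rpow hp, Finset.mul_sum, PiLp.smul_apply, smul_eq_mul, abs_mul,
    abs_of_nonneg ha, Real.mul_rpow ha (abs_nonneg _)]

end LpNorm

lemma add_le_upperModel {n : ℕ} {S : Set (EuclideanSpace ℝ (Fin n))}
    {f h : EuclideanSpace ℝ (Fin n) → ℝ} {g : EuclideanSpace ℝ (Fin n) → EuclideanSpace ℝ (Fin n)}
    (hh : ConvexOn ℝ S h) {p lam : ℝ} (hp : 0 < p)
    (hdescent : ∀ x ∈ S, ∀ y ∈ S,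
      f y ≤ f x + ⟪g x, y - x⟫ + lam / 2 * lpNorm p (y - x) ^ p)
    {x y : EuclideanSpace ℝ (Fin n)} (hx : x ∈ S) (hy : y ∈ S)
    {a : ℝ} (ha : a ∈ Set.Icc (0 : ℝ) 1) :
    f ((1 - a) • x + a • y) + h ((1 - a) • x + a • y)
      ≤ f x + (a * ⟪g x, y - x⟫ + a ^ p * (lam / 2) * lpNorm p (y - x) ^ p
          + (1 - a) * h x + a * h y) := by
  obtain ⟨ha0, ha1⟩ := ha
  have hstep : (1 - a) • x + a • y - x = a • (y - x) := by module
  have hf := hdescent x hx _ (hh.1 hx hy (sub_nonneg.2 ha1) ha0 (by ring))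
  rw [hstep, real_inner_smul_right, lpNorm_smul_rpow hp ha0] at hf
  have hconv := hh.2 hx hy (sub_nonneg.2 ha1) ha0 (by ring)
  simp only [smul_eq_mul] at hconv
  linarith

lemma rpow_one_div_sub_one_rpow {p t : ℝ} (hp : 1 < p) (ht : 0 < t) :
    (t ^ (1 / (p - 1))) ^ p = t ^ (1 / (p - 1)) * t := by
  have hp1 : p - 1 ≠ 0 := (sub_pos.2 hp).ne'
  rw [← Real.rpow_mul ht.le, ← Real.rpow_add_one ht.ne']
  congr 1
  field_simp
  ring

theorem stmt_17_general {n : ℕ} {S : Set (EuclideanSpace ℝ (Fin n))}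
    (hS : Convex ℝ S)
    {f h : EuclideanSpace ℝ (Fin n) → ℝ} {g : EuclideanSpace ℝ (Fin n) → EuclideanSpace ℝ (Fin n)}
    (hh : ConvexOn ℝ Set.univ h)
    {p lam : ℝ} (hp : 1 < p) (hlam : 0 < lam)
    (hdescent : ∀ x ∈ S, ∀ y ∈ S,
      f y ≤ f x + ⟪g x, y - x⟫ + lam / 2 * lpNorm p (y - x) ^ p)
    {D : ℝ} (hD : IsGreatest {d : ℝ | ∃ u ∈ S, ∃ v ∈ S, d = lpNorm p (u - v)} D)
    {eps : ℝ} (heps0 : 0 < eps) (heps : eps ≤ D ^ p * lam)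
    {xk yk : EuclideanSpace ℝ (Fin n)} (hxk : xk ∈ S) (hyk : yk ∈ S)
    {ak : ℝ} (hak : ak ∈ Set.Icc (0 : ℝ) 1)
    (hmina : IsMinOn (fun a : ℝ =>
        a * ⟪g xk, yk - xk⟫ + a ^ p * (lam / 2) * lpNorm p (yk - xk) ^ p
          + (1 - a) * h xk + a * h yk)
      (Set.Icc (0 : ℝ) 1) ak)
    {xk1 : EuclideanSpace ℝ (Fin n)} (hxk1 : xk1 = (1 - ak) • xk + ak • yk) :
    -⟪g xk, yk - xk⟫ + h xk - h yk
      ≤ (eps / (D ^ p * lam)) ^ (-(1 / (p - 1)))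
          * ((f xk + h xk) - (f xk1 + h xk1)) + eps / 2 := by
  have hDlam : 0 < D ^ p * lam := heps0.trans_le heps
  set t := eps / (D ^ p * lam) with ht
  have ht0 : 0 < t := div_pos heps0 hDlam
  set α := t ^ (1 / (p - 1))
  have hα0 : 0 < α := Real.rpow_pos_of_pos ht0 _
  have hα1 : α ≤ 1 :=
    Real.rpow_le_one ht0.le ((div_le_one hDlam).2 heps) (by have := sub_pos.2 hp; positivity)
  have hmodel := (add_le_upperModel (hh.subset (Set.subset_univ S) hS) (by linarith) hdescent
    hxk hyk hak).trans (add_le_add le_rfl (hmina ⟨hα0.le, hα1⟩))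
  beta_reduce at hmodel
  rw [← hxk1, rpow_one_div_sub_one_rpow hp ht0] at hmodel
  have hpow : lpNorm p (yk - xk) ^ p ≤ D ^ p :=
    Real.rpow_le_rpow (lpNorm_nonneg _) (hD.2 ⟨yk, hyk, xk, hxk, rfl⟩) (by linarith)
  have hpenalty : t * (lam / 2) * lpNorm p (yk - xk) ^ p ≤ eps / 2 :=
    calc t * (lam / 2) * lpNorm p (yk - xk) ^ p ≤ t * (lam / 2) * D ^ p := by gcongr
      _ = eps / 2 := by
        have hDp : D ^ p ≠ 0 := left_ne_zero_of_mul hDlam.ne'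
        rw [ht]; field_simp
  rw [Real.rpow_neg ht0.le, ← sub_le_iff_le_add, le_inv_mul_iff₀ hα0]
  linarith [mul_le_mul_of_nonneg_left hpenalty hα0.le]

theorem stmt_17 {n : ℕ} {S : Set (EuclideanSpace ℝ (Fin n))}
    (hS : Convex ℝ S) (hScpt : IsCompact S)
    {f h : EuclideanSpace ℝ (Fin n) → ℝ} {g : EuclideanSpace ℝ (Fin n) → EuclideanSpace ℝ (Fin n)}
    (hf : ∀ x, HasGradientAt f (g x) x)
    (hh : ConvexOn ℝ Set.univ h)
    {p lam : ℝ} (hp : 1 < p) (hlam : 0 < lam)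
    (hdescent : ∀ x ∈ S, ∀ y ∈ S,
      f y ≤ f x + ⟪g x, y - x⟫ + lam / 2 * lpNorm p (y - x) ^ p)
    {D : ℝ} (hD : IsGreatest {d : ℝ | ∃ u ∈ S, ∃ v ∈ S, d = lpNorm p (u - v)} D)
    {eps : ℝ} (heps0 : 0 < eps) (heps : eps ≤ D ^ p * lam)
    {xk yk : EuclideanSpace ℝ (Fin n)} (hxk : xk ∈ S) (hyk : yk ∈ S)
    (hminy : IsMinOn (fun y => ⟪g xk, y - xk⟫ + h y) S yk)
    {ak : ℝ} (hak : ak ∈ Set.Icc (0 : ℝ) 1)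
    (hmina : IsMinOn (fun a : ℝ =>
        a * ⟪g xk, yk - xk⟫ + a ^ p * (lam / 2) * lpNorm p (yk - xk) ^ p
          + (1 - a) * h xk + a * h yk)
      (Set.Icc (0 : ℝ) 1) ak)
    {xk1 : EuclideanSpace ℝ (Fin n)} (hxk1 : xk1 = (1 - ak) • xk + ak • yk) :
    -⟪g xk, yk - xk⟫ + h xk - h yk
      ≤ (eps / (D ^ p * lam)) ^ (-(1 / (p - 1)))
          * ((f xk + h xk) - (f xk1 + h xk1)) + eps / 2 :=
  stmt_17_general hS hh hp hlam hdescent hD heps0 heps hxk hyk hak hmina hxk1
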